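/- Let f: ℝᵈ → ℝ be convex and L-smooth with minimizer w*. Consider the iteration w₀ = 0, wₖ₊₁ = wₖ - gₖ/(2L) with ‖gₖ - ∇f(wₖ)‖ ≤ ε and ‖gₖ‖ ≥ 4ε for all k < K. Define Eₖ = L‖wₖ - w*‖² + k(f(wₖ) - f(w*) - ε‖w*‖). If additionally f(wₖ) - f(w*) ≥ ε‖w*‖ and ‖wₖ - w*‖ ≤ ‖w*‖ hold for all relevant k, then Eₖ₊₁ ≤ Eₖ for all k ∈ [0, K-1]. -/

import Mathlib

/-!
An inexact gradient step `x' = x - g / (2L)` with `‖g - ∇f x‖ ≤ ε` and `‖g‖ ≥ 4ε` still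
decreases `f` by at least `L‖x - x'‖²`: by the descent lemma, since the error `ε` costs at most a
quarter of `‖g‖`. Combining this with the convexity inequality `f x - f w ≤ ⟪∇f x, x - w⟫` and
expanding `‖x' - w‖²` gives `L‖x' - w‖² ≤ L‖x - w‖² + f w - f x' + ε‖x - w‖`. For `w = w*`,
`Eₖ₊₁ - Eₖ` is then at most `k (f wₖ₊₁ - f wₖ) + ε (‖wₖ - w*‖ - ‖w*‖) ≤ 0`.
-/

open scoped RealInnerProductSpace
open Set

variable {F : Type*} [NormedAddCommGroup F] [InnerProductSpace ℝ F]

theorem abs_inner_sub_inner_le {a b : F} {ε : ℝ} (hab : ‖a - b‖ ≤ ε) (z : F) :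
    |⟪a, z⟫ - ⟪b, z⟫| ≤ ε * ‖z‖ := by
  rw [← inner_sub_left]
  exact (abs_real_inner_le_norm _ _).trans (mul_le_mul_of_nonneg_right hab (norm_nonneg z))

theorem eq_smul_sub_of_eq_sub_one_div_smul {x x' g : F} {c : ℝ} (hc : c ≠ 0)
    (hx' : x' = x - (1 / c) • g) : g = c • (x - x') := by
  rw [hx', sub_sub_cancel, smul_smul, mul_one_div_cancel hc, one_smul]

variable [CompleteSpace F] {f : F → ℝ}

theorem HasGradientAt.hasDerivAt_comp_add_smul {x v : F} {t : ℝ} {g : F}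
    (hf : HasGradientAt f g (x + t • v)) :
    HasDerivAt (fun s : ℝ => f (x + s • v)) ⟪g, v⟫ t := by
  have hline : HasDerivAt (fun s : ℝ => x + s • v) v t := by
    simpa using ((hasDerivAt_id t).smul_const v).const_add x
  simpa [Function.comp_def] using
    (hasGradientAt_iff_hasFDerivAt.mp hf).comp_hasDerivAt t hline

theorem ConvexOn.inner_gradient_le_sub (hconv : ConvexOn ℝ univ f) {g x : F}
    (hf : HasGradientAt f g x) (y : F) : ⟪g, y - x⟫ ≤ f y - f x := by
  have hline : ConvexOn ℝ univ (fun t : ℝ => f (x + t • (y - x))) := by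
    simpa [Function.comp_def, AffineMap.lineMap_apply, add_comm] using
      hconv.comp_affineMap (AffineMap.lineMap x y)
  have hd := (show HasGradientAt f g (x + (0 : ℝ) • (y - x)) by simpa using hf)
    |>.hasDerivAt_comp_add_smul
  simpa [slope_def_field] using hline.le_slope_of_hasDerivAt (mem_univ 0) (mem_univ 1) one_pos hd

theorem le_add_inner_gradient_add_of_lipschitz {f' : F → F}
    (hf' : ∀ x, HasGradientAt f (f' x) x) {L : ℝ}
    (hsmooth : ∀ x y, ‖f' x - f' y‖ ≤ L * ‖x - y‖) (x y : F) :
    f y ≤ f x + ⟪f' x, y - x⟫ + L / 2 * ‖y - x‖ ^ 2 := by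
  set v := y - x
  have hd (t : ℝ) : HasDerivAt (fun s : ℝ => f (x + s • v)) ⟪f' (x + t • v), v⟫ t :=
    (hf' _).hasDerivAt_comp_add_smul
  have hB (t : ℝ) : HasDerivAt (fun s : ℝ => f x + s * ⟪f' x, v⟫ + L / 2 * s ^ 2 * ‖v‖ ^ 2)
      (⟪f' x, v⟫ + L * t * ‖v‖ ^ 2) t := by
    have := (((hasDerivAt_id' t).mul_const ⟪f' x, v⟫).const_add (f x)).add
      (((hasDerivAt_pow 2 t).const_mul (L / 2)).mul_const (‖v‖ ^ 2))
    exact this.congr_deriv (by push_cast; ring)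
  have hslope : ∀ t ∈ Ico (0 : ℝ) 1, ⟪f' (x + t • v), v⟫ ≤ ⟪f' x, v⟫ + L * t * ‖v‖ ^ 2 := by
    rintro t ⟨ht, -⟩
    have hlip : ‖f' (x + t • v) - f' x‖ ≤ L * (t * ‖v‖) := by
      simpa [norm_smul, abs_of_nonneg ht] using hsmooth (x + t • v) x
    have := (real_inner_le_norm (f' (x + t • v) - f' x) v).trans
      (mul_le_mul_of_nonneg_right hlip (norm_nonneg v))
    rw [inner_sub_left] at this
    linarith
  have := image_le_of_deriv_right_le_deriv_boundary
    (fun t _ => (hd t).continuousAt.continuousWithinAt)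
    (fun t _ => (hd t).hasDerivWithinAt) (by simp)
    (fun t _ => (hB t).continuousAt.continuousWithinAt)
    (fun t _ => (hB t).hasDerivWithinAt) hslope (right_mem_Icc.mpr zero_le_one)
  simpa [v] using this

section InexactGradientStep

variable {f' : F → F} {L ε : ℝ} {x x' g : F}

theorem mul_norm_sub_sq_le_sub_of_step (hf' : ∀ x, HasGradientAt f (f' x) x) (hL : 0 < L)
    (hsmooth : ∀ x y, ‖f' x - f' y‖ ≤ L * ‖x - y‖) (hx' : x' = x - (1 / (2 * L)) • g)
    (hg : ‖g - f' x‖ ≤ ε) (hgnorm : 4 * ε ≤ ‖g‖) :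
    L * ‖x - x'‖ ^ 2 ≤ f x - f x' := by
  set u := x - x'
  have hgu : g = (2 * L) • u := eq_smul_sub_of_eq_sub_one_div_smul (by positivity) hx'
  have hgn : ‖g‖ = 2 * L * ‖u‖ := by
    rw [hgu, norm_smul, Real.norm_of_nonneg (by positivity)]
  have hgu_inner : ⟪g, u⟫ = 2 * L * ‖u‖ ^ 2 := by
    rw [hgu, real_inner_smul_left, real_inner_self_eq_norm_sq]
  have hεu : ε * ‖u‖ ≤ L / 2 * ‖u‖ ^ 2 := by
    rw [hgn] at hgnorm
    nlinarith [mul_le_mul_of_nonneg_right hgnorm (norm_nonneg u)]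
  have hdescent := le_add_inner_gradient_add_of_lipschitz hf' hsmooth x x'
  rw [show x' - x = -u by simp [u], inner_neg_right, norm_neg] at hdescent
  linarith [(abs_le.mp (abs_inner_sub_inner_le hg u)).2]

theorem mul_norm_sub_sq_le_of_step (hf' : ∀ x, HasGradientAt f (f' x) x)
    (hconv : ConvexOn ℝ univ f) (hL : 0 < L)
    (hsmooth : ∀ x y, ‖f' x - f' y‖ ≤ L * ‖x - y‖) (hx' : x' = x - (1 / (2 * L)) • g)
    (hg : ‖g - f' x‖ ≤ ε) (hgnorm : 4 * ε ≤ ‖g‖) (w : F) :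
    L * ‖x' - w‖ ^ 2 ≤ L * ‖x - w‖ ^ 2 + f w - f x' + ε * ‖x - w‖ := by
  have hdecrease := mul_norm_sub_sq_le_sub_of_step hf' hL hsmooth hx' hg hgnorm
  have hgx : ⟪g, x - w⟫ = 2 * L * ⟪x - x', x - w⟫ := by
    rw [eq_smul_sub_of_eq_sub_one_div_smul (by positivity) hx', real_inner_smul_left]
  have hconvex : f x - f w ≤ ⟪f' x, x - w⟫ := by
    have := hconv.inner_gradient_le_sub (hf' x) w
    rw [← neg_sub x w, inner_neg_right] at this
    linarith
  have hexpand : ‖x' - w‖ ^ 2 = ‖x - w‖ ^ 2 - 2 * ⟪x - x', x - w⟫ + ‖x - x'‖ ^ 2 := by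
    rw [show x' - w = (x - w) - (x - x') by abel, norm_sub_sq_real, real_inner_comm]
  rw [hexpand]
  linarith [(abs_le.mp (abs_inner_sub_inner_le hg (x - w))).1]

end InexactGradientStep

theorem stmt_10_general {d : ℕ} (f : EuclideanSpace ℝ (Fin d) → ℝ)
    (f' : EuclideanSpace ℝ (Fin d) → EuclideanSpace ℝ (Fin d))
    (hf' : ∀ x, HasGradientAt f (f' x) x)
    (hconv : ConvexOn ℝ Set.univ f)
    (L : ℝ) (hL : 0 < L)
    (hsmooth : ∀ x y, ‖f' x - f' y‖ ≤ L * ‖x - y‖)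
    (wstar : EuclideanSpace ℝ (Fin d))
    (ε : ℝ) (hε : 0 ≤ ε) (K : ℕ)
    (w g : ℕ → EuclideanSpace ℝ (Fin d))
    (hstep : ∀ k < K, w (k + 1) = w k - (1 / (2 * L)) • g k)
    (hg : ∀ k < K, ‖g k - f' (w k)‖ ≤ ε)
    (hgnorm : ∀ k < K, 4 * ε ≤ ‖g k‖)
    (hdist : ∀ k ≤ K, ‖w k - wstar‖ ≤ ‖wstar‖) :
    ∀ k < K,
      L * ‖w (k + 1) - wstar‖ ^ 2
          + (k + 1 : ℝ) * (f (w (k + 1)) - f wstar - ε * ‖wstar‖)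
        ≤ L * ‖w k - wstar‖ ^ 2 + (k : ℝ) * (f (w k) - f wstar - ε * ‖wstar‖) := by
  intro k hk
  have hdecrease := mul_norm_sub_sq_le_sub_of_step hf' hL hsmooth (hstep k hk) (hg k hk)
    (hgnorm k hk)
  have hfdec : f (w (k + 1)) ≤ f (w k) :=
    sub_nonneg.mp (le_trans (by positivity) hdecrease)
  have hmono : (k : ℝ) * f (w (k + 1)) ≤ k * f (w k) :=
    mul_le_mul_of_nonneg_left hfdec k.cast_nonneg
  have hcloser := mul_norm_sub_sq_le_of_step hf' hconv hL hsmooth (hstep k hk) (hg k hk)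
    (hgnorm k hk) wstar
  have hbounded : ε * ‖w k - wstar‖ ≤ ε * ‖wstar‖ :=
    mul_le_mul_of_nonneg_left (hdist k hk.le) hε
  linear_combination hcloser + hmono + hbounded

/-- The potential `Eₖ = L‖wₖ - w*‖² + k(f(wₖ) - f(w*) - ε‖w*‖)` is
nonincreasing along the approximate-gradient iteration. -/
theorem stmt_10 {d : ℕ} (f : EuclideanSpace ℝ (Fin d) → ℝ)
    (f' : EuclideanSpace ℝ (Fin d) → EuclideanSpace ℝ (Fin d))
    (hf' : ∀ x, HasGradientAt f (f' x) x)
    (hconv : ConvexOn ℝ Set.univ f)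
    (L : ℝ) (hL : 0 < L)
    (hsmooth : ∀ x y, ‖f' x - f' y‖ ≤ L * ‖x - y‖)
    (wstar : EuclideanSpace ℝ (Fin d)) (hmin : ∀ x, f wstar ≤ f x)
    (ε : ℝ) (hε : 0 ≤ ε) (K : ℕ)
    (w g : ℕ → EuclideanSpace ℝ (Fin d))
    (hw0 : w 0 = 0)
    (hstep : ∀ k < K, w (k + 1) = w k - (1 / (2 * L)) • g k)
    (hg : ∀ k < K, ‖g k - f' (w k)‖ ≤ ε)
    (hgnorm : ∀ k < K, 4 * ε ≤ ‖g k‖)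
    (hgap : ∀ k ≤ K, ε * ‖wstar‖ ≤ f (w k) - f wstar)
    (hdist : ∀ k ≤ K, ‖w k - wstar‖ ≤ ‖wstar‖) :
    ∀ k < K,
      L * ‖w (k + 1) - wstar‖ ^ 2
          + (k + 1 : ℝ) * (f (w (k + 1)) - f wstar - ε * ‖wstar‖)
        ≤ L * ‖w k - wstar‖ ^ 2 + (k : ℝ) * (f (w k) - f wstar - ε * ‖wstar‖) :=
  stmt_10_general f f' hf' hconv L hL hsmooth wstar ε hε K w g hstep hg hgnorm hdist
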